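/- arXiv:math/0212266 — 4 statements merged into one kernel-verified Lean document; each statement's English description precedes it below -/
import Mathlib

section
/- Let p : E → X and q : F → X be local homeomorphisms of topological spaces, and let 𝒮(p) and 𝒮(q) be their sheaves of sections. Then the assignment sending a continuous map f : E → F with q ∘ f = p to the morphism of sheaves 𝒮(p) → 𝒮(q) given on each open U by post-composition s ↦ f ∘ s is a bijection between the set of continuous maps f : E → F over X and the set of morphisms of presheaves 𝒮(p) → 𝒮(q). (This is the fully faithful part of the equivalence between étale spaces over X and sheaves on X.) -/
/-!
Two sections of a local homeomorphism `p` that agree at a point agree on a neighbourhood of it,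
so a morphism of presheaves `Φ` sends them to sections agreeing at that point. Hence
`f e := Φ(s)(p e)`, for any local section `s` through `e`, is well defined, and
`Φ(t) = f ∘ t` for every section `t`. Near `e`, `f` is `Φ(s) ∘ p` for a single local inverse
`s` of `p`, so `f` is continuous; uniqueness holds because every point lies on a local section.
-/

open TopologicalSpace

/-- The set of continuous sections of `p : E → X` over an open set `U ⊆ X`. -/
def Sec {E X : Type} [TopologicalSpace E] [TopologicalSpace X]
    (p : E → X) (U : Opens X) : Type :=
  { s : ↥U → E // Continuous s ∧ ∀ x : ↥U, p (s x) = ↑x }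

/-- Restriction of sections along an inclusion of open sets. -/
def Sec.restrict {E X : Type} [TopologicalSpace E] [TopologicalSpace X]
    (p : E → X) {U V : Opens X} (h : V ≤ U) (s : Sec p U) : Sec p V :=
  ⟨fun x => s.1 ⟨x.1, h x.2⟩,
    s.2.1.comp (Continuous.subtype_mk continuous_subtype_val fun x => h x.2),
    fun x => s.2.2 ⟨x.1, h x.2⟩⟩

namespace Sec

variable {E F X : Type} [TopologicalSpace E] [TopologicalSpace F] [TopologicalSpace X]
  {p : E → X} {q : F → X}

def preimage {U : Opens X} (s : Sec p U) {O : Set E} (hO : IsOpen O) : Opens X :=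
  ⟨Subtype.val '' (s.1 ⁻¹' O), U.2.isOpenMap_subtype_val _ (hO.preimage s.2.1)⟩

theorem preimage_le {U : Opens X} (s : Sec p U) {O : Set E} (hO : IsOpen O) :
    s.preimage hO ≤ U := by
  rintro _ ⟨z, -, rfl⟩
  exact z.2

theorem exists_restrict_eq_of_apply_eq (hp : IsLocallyInjective p) {U V : Opens X}
    (s : Sec p U) (t : Sec p V) {x : X} (hU : x ∈ U) (hV : x ∈ V)
    (hst : s.1 ⟨x, hU⟩ = t.1 ⟨x, hV⟩) :
    ∃ (W : Opens X) (hWU : W ≤ U) (hWV : W ≤ V), x ∈ W ∧ restrict p hWU s = restrict p hWV t := by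
  obtain ⟨O, hO, hxO, hinj⟩ := hp (s.1 ⟨x, hU⟩)
  refine ⟨s.preimage hO ⊓ t.preimage hO, inf_le_left.trans (s.preimage_le hO),
    inf_le_right.trans (t.preimage_le hO), ⟨⟨_, hxO, rfl⟩, ⟨_, hst ▸ hxO, rfl⟩⟩, ?_⟩
  refine Subtype.ext (funext fun ⟨_, ⟨z, hz, rfl⟩, ⟨⟨y, hyV⟩, hy, hyz⟩⟩ => ?_)
  obtain rfl : y = z.1 := hyz
  exact hinj hz hy ((s.2.2 z).trans (t.2.2 ⟨z, hyV⟩).symm)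

def IsNatural (Φ : ∀ U : Opens X, Sec p U → Sec q U) : Prop :=
  ∀ (U V : Opens X) (h : V ≤ U) (s : Sec p U), Φ V (restrict p h s) = restrict q h (Φ U s)

theorem IsNatural.apply_eq_of_apply_eq {Φ : ∀ U : Opens X, Sec p U → Sec q U}
    (hΦ : IsNatural Φ) (hp : IsLocallyInjective p) {U V : Opens X} (s : Sec p U) (t : Sec p V)
    (x : U) (y : V) (hxy : (x : X) = y) (hst : s.1 x = t.1 y) : (Φ U s).1 x = (Φ V t).1 y := by
  obtain ⟨x, hU⟩ := x
  obtain ⟨y, hV⟩ := y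
  obtain rfl : x = y := hxy
  obtain ⟨W, hWU, hWV, hxW, hW⟩ := exists_restrict_eq_of_apply_eq hp s t hU hV hst
  calc (Φ U s).1 ⟨x, hU⟩ = (restrict q hWU (Φ U s)).1 ⟨x, hxW⟩ := rfl
    _ = (restrict q hWV (Φ V t)).1 ⟨x, hxW⟩ := by rw [← hΦ, ← hΦ, hW]
    _ = (Φ V t).1 ⟨x, hV⟩ := rfl

section LocalHomeomorph

variable (hp : IsLocalHomeomorph p)

theorem mem_localInverseAt_source {e e' : E} (he' : e' ∈ (hp.localInverseAt e).target) :
    p e' ∈ (hp.localInverseAt e).source := by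
  simpa only [hp.localInverseAt_symm] using (hp.localInverseAt e).map_target he'

noncomputable def ofLocalInverseAt (e : E) :
    Sec p ⟨(hp.localInverseAt e).source, (hp.localInverseAt e).open_source⟩ :=
  ⟨fun x => hp.localInverseAt e x, (hp.localInverseAt e).continuousOn.domRestrict,
    fun x => hp.apply_localInverseAt_of_mem x.2⟩

theorem ofLocalInverseAt_apply {e e' : E} (he' : e' ∈ (hp.localInverseAt e).target) :
    (ofLocalInverseAt hp e).1 ⟨p e', mem_localInverseAt_source hp he'⟩ = e' :=
  show hp.localInverseAt e (p e') = e' by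
    simpa only [hp.localInverseAt_symm] using (hp.localInverseAt e).right_inv he'

noncomputable def inducedMap (Φ : ∀ U : Opens X, Sec p U → Sec q U) (e : E) : F :=
  (Φ _ (ofLocalInverseAt hp e)).1
    ⟨p e, mem_localInverseAt_source hp hp.self_mem_localInverseAt_target⟩

variable {Φ : ∀ U : Opens X, Sec p U → Sec q U}

theorem apply_inducedMap (e : E) : q (inducedMap hp Φ e) = p e :=
  (Φ _ (ofLocalInverseAt hp e)).2.2 _

theorem IsNatural.apply_eq_inducedMap (hΦ : IsNatural Φ) {U : Opens X} (s : Sec p U) (x : U) :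
    (Φ U s).1 x = inducedMap hp Φ (s.1 x) :=
  hΦ.apply_eq_of_apply_eq hp.isLocallyInjective _ _ _ _ (s.2.2 x).symm
    (ofLocalInverseAt_apply hp hp.self_mem_localInverseAt_target).symm

theorem IsNatural.continuous_inducedMap (hΦ : IsNatural Φ) : Continuous (inducedMap hp Φ) := by
  refine continuous_iff_continuousAt.2 fun e => ?_
  set φ := hp.localInverseAt e
  have hrestrict : φ.target.domRestrict (inducedMap hp Φ) = (Φ _ (ofLocalInverseAt hp e)).1 ∘
      fun e' : φ.target => ⟨p e', mem_localInverseAt_source hp e'.2⟩ := by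
    funext e'
    rw [Function.comp_apply, hΦ.apply_eq_inducedMap hp]
    exact congrArg _ (ofLocalInverseAt_apply hp e'.2).symm
  have hcont : ContinuousOn (inducedMap hp Φ) φ.target := by
    rw [continuousOn_iff_continuous_domRestrict, hrestrict]
    exact (Φ _ _).2.1.comp ((hp.continuous.comp continuous_subtype_val).subtype_mk _)
  exact hcont.continuousAt (φ.open_target.mem_nhds hp.self_mem_localInverseAt_target)

theorem eq_inducedMap {g : E → F} (hg : ∀ (U : Opens X) (s : Sec p U) (x : U),
    (Φ U s).1 x = g (s.1 x)) : g = inducedMap hp Φ := by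
  funext e
  calc g e = g ((ofLocalInverseAt hp e).1 _) := by
        rw [ofLocalInverseAt_apply hp hp.self_mem_localInverseAt_target]
    _ = inducedMap hp Φ e := (hg _ _ _).symm

end LocalHomeomorph

end Sec

theorem etale_spaces_to_sheaves_fully_faithful_general
    {E F X : Type} [TopologicalSpace E] [TopologicalSpace F] [TopologicalSpace X]
    (p : E → X) (q : F → X) (hp : IsLocalHomeomorph p)
    (Φ : ∀ U : Opens X, Sec p U → Sec q U)
    (hΦ : ∀ (U V : Opens X) (h : V ≤ U) (s : Sec p U),
      Φ V (Sec.restrict p h s) = Sec.restrict q h (Φ U s)) :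
    ∃! f : { f : E → F // Continuous f ∧ ∀ e : E, q (f e) = p e },
      ∀ (U : Opens X) (s : Sec p U) (x : ↥U), (Φ U s).1 x = f.1 (s.1 x) := by
  have hnat : Sec.IsNatural Φ := hΦ
  exact ⟨⟨Sec.inducedMap hp Φ, hnat.continuous_inducedMap hp, Sec.apply_inducedMap hp⟩,
    fun _ s x => hnat.apply_eq_inducedMap hp s x,
    fun _ hg => Subtype.ext (Sec.eq_inducedMap hp hg)⟩

theorem etale_spaces_to_sheaves_fully_faithful
    {E F X : Type} [TopologicalSpace E] [TopologicalSpace F] [TopologicalSpace X]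
    (p : E → X) (q : F → X) (hp : IsLocalHomeomorph p) (hq : IsLocalHomeomorph q)
    (Φ : ∀ U : Opens X, Sec p U → Sec q U)
    (hΦ : ∀ (U V : Opens X) (h : V ≤ U) (s : Sec p U),
      Φ V (Sec.restrict p h s) = Sec.restrict q h (Φ U s)) :
    ∃! f : { f : E → F // Continuous f ∧ ∀ e : E, q (f e) = p e },
      ∀ (U : Opens X) (s : Sec p U) (x : ↥U), (Φ U s).1 x = f.1 (s.1 x) :=
  etale_spaces_to_sheaves_fully_faithful_general p q hp Φ hΦ
end

section
/- Let 𝒢 be a sheaf of groups on a topological space X, let X = ⋃_α U_α be an open cover, and let 𝒮 and 𝒮′ be 𝒢-torsors with chosen sections s_α ∈ 𝒮(U_α) and s′_α ∈ 𝒮′(U_α), with associated cocycles g_{αβ}, g′_{αβ} ∈ 𝒢(U_{αβ}) determined by g_{αβ}·(s_β|U_{αβ}) = s_α|U_{αβ} and g′_{αβ}·(s′_β|U_{αβ}) = s′_α|U_{αβ}. If the cocycles are equivalent, i.e. there exist f_α ∈ 𝒢(U_α) with f_α g_{αβ} = g′_{αβ} f_β on U_{αβ} for all α, β, then 𝒮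 and 𝒮′ are isomorphic as 𝒢-torsors. -/
/-!
STATEMENT 12: If the cocycles associated to two 𝒢-torsors 𝒮, 𝒮′ (with respect to
chosen sections over a common open cover) are equivalent — i.e. there are
f_α ∈ 𝒢(U_α) with f_α g_{αβ} = g′_{αβ} f_β on U_{αβ} — then 𝒮 and 𝒮′ are
isomorphic as 𝒢-torsors.
-/

open TopologicalSpace

/-- A sheaf of sets on a topological space `X`: a presheaf (restriction maps,
functorial) which is separated and has gluing for compatible families. -/
structure SheafOfSets (X : Type) [TopologicalSpace X] : Type 1 where
  obj : Opens X → Type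
  res : ∀ {U V : Opens X}, V ≤ U → obj U → obj V
  res_id : ∀ {U : Opens X} (a : obj U), res le_rfl a = a
  res_comp : ∀ {U V W : Opens X} (hWV : W ≤ V) (hVU : V ≤ U) (a : obj U),
    res hWV (res hVU a) = res (hWV.trans hVU) a
  sep : ∀ {U : Opens X} {ι : Type} (V : ι → Opens X) (hV : ∀ i, V i ≤ U),
    (∀ x ∈ U, ∃ i, x ∈ V i) →
    ∀ a b : obj U, (∀ i, res (hV i) a = res (hV i) b) → a = b
  glue : ∀ {U : Opens X} {ι : Type} (V : ι → Opens X) (hV : ∀ i, V i ≤ U),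
    (∀ x ∈ U, ∃ i, x ∈ V i) →
    ∀ s : ∀ i, obj (V i),
      (∀ i j, res (inf_le_left : V i ⊓ V j ≤ V i) (s i) =
        res (inf_le_right : V i ⊓ V j ≤ V j) (s j)) →
      ∃ a : obj U, ∀ i, res (hV i) a = s i

/-- A sheaf of groups on a topological space `X`: a presheaf of groups (with
group-homomorphic restriction maps) satisfying the sheaf condition. -/
structure SheafOfGroups (X : Type) [TopologicalSpace X] : Type 1 where
  obj : Opens X → GrpCat.{0}
  res : ∀ {U V : Opens X}, V ≤ U → (obj U →* obj V)
  res_id : ∀ {U : Opens X} (a : obj U), res le_rfl a = a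
  res_comp : ∀ {U V W : Opens X} (hWV : W ≤ V) (hVU : V ≤ U) (a : obj U),
    res hWV (res hVU a) = res (hWV.trans hVU) a
  sep : ∀ {U : Opens X} {ι : Type} (V : ι → Opens X) (hV : ∀ i, V i ≤ U),
    (∀ x ∈ U, ∃ i, x ∈ V i) →
    ∀ a b : obj U, (∀ i, res (hV i) a = res (hV i) b) → a = b
  glue : ∀ {U : Opens X} {ι : Type} (V : ι → Opens X) (hV : ∀ i, V i ≤ U),
    (∀ x ∈ U, ∃ i, x ∈ V i) →
    ∀ s : ∀ i, obj (V i),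
      (∀ i j, res (inf_le_left : V i ⊓ V j ≤ V i) (s i) =
        res (inf_le_right : V i ⊓ V j ≤ V j) (s j)) →
      ∃ a : obj U, ∀ i, res (hV i) a = s i

/-- A structure of `G`-torsor on a sheaf of sets `S`: an action of `G` on `S`
compatible with restriction, such that `S` has sections locally around every point
and the action of `G(U)` on `S(U)` is free and transitive for every open `U`. -/
structure TorsorStr {X : Type} [TopologicalSpace X]
    (G : SheafOfGroups X) (S : SheafOfSets X) where
  act : ∀ U : Opens X, G.obj U → S.obj U → S.obj U
  one_act : ∀ (U : Opens X) (s : S.obj U), act U 1 s = s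
  mul_act : ∀ (U : Opens X) (g h : G.obj U) (s : S.obj U),
    act U (g * h) s = act U g (act U h s)
  res_act : ∀ {U V : Opens X} (h : V ≤ U) (g : G.obj U) (s : S.obj U),
    S.res h (act U g s) = act V (G.res h g) (S.res h s)
  nonempty_cover : ∀ x : X, ∃ U : Opens X, x ∈ U ∧ Nonempty (S.obj U)
  free : ∀ (U : Opens X) (g : G.obj U) (s : S.obj U), act U g s = s → g = 1
  trans : ∀ (U : Opens X) (s t : S.obj U), ∃ g : G.obj U, act U g s = t


namespace TorsorStr

variable {X : Type} [TopologicalSpace X] {G : SheafOfGroups X} {S : SheafOfSets X}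

lemma act_cancel (μ : TorsorStr G S) {U : Opens X} {g h : G.obj U} {x : S.obj U}
    (H : μ.act U g x = μ.act U h x) : g = h := by
  have h1 : μ.act U (h⁻¹ * g) x = x := by
    rw [μ.mul_act, H, ← μ.mul_act, inv_mul_cancel, μ.one_act]
  exact (inv_mul_eq_one.mp (μ.free U _ x h1)).symm

noncomputable def div (μ : TorsorStr G S) (U : Opens X) (t x : S.obj U) : G.obj U :=
  Classical.choose (μ.trans U x t)

lemma div_spec (μ : TorsorStr G S) (U : Opens X) (t x : S.obj U) :
    μ.act U (μ.div U t x) x = t := Classical.choose_spec (μ.trans U x t)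

lemma div_eq (μ : TorsorStr G S) {U : Opens X} {t x : S.obj U} {g : G.obj U}
    (h : μ.act U g x = t) : μ.div U t x = g :=
  μ.act_cancel ((μ.div_spec U t x).trans h.symm)

end TorsorStr

/-- The unique local comparison element: `hSec μ U s V x α` is the unique element of
`G(V ⊓ U α)` carrying the restriction of `s α` to the restriction of `x`. -/
noncomputable def hSec {X : Type} [TopologicalSpace X] {G : SheafOfGroups X} {S : SheafOfSets X}
    (μ : TorsorStr G S) {A : Type} (U : A → Opens X) (s : ∀ α, S.obj (U α))
    (V : Opens X) (x : S.obj V) (α : A) : G.obj (V ⊓ U α) :=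
  μ.div (V ⊓ U α) (S.res inf_le_left x) (S.res inf_le_right (s α))

lemma hSec_spec {X : Type} [TopologicalSpace X] {G : SheafOfGroups X} {S : SheafOfSets X}
    (μ : TorsorStr G S) {A : Type} (U : A → Opens X) (s : ∀ α, S.obj (U α))
    (V : Opens X) (x : S.obj V) (α : A) :
    μ.act (V ⊓ U α) (hSec μ U s V x α) (S.res inf_le_right (s α)) = S.res inf_le_left x :=
  μ.div_spec _ _ _

lemma hSec_eq {X : Type} [TopologicalSpace X] {G : SheafOfGroups X} {S : SheafOfSets X}
    (μ : TorsorStr G S) {A : Type} (U : A → Opens X) (s : ∀ α, S.obj (U α))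
    (V : Opens X) (x : S.obj V) (α : A) {k : G.obj (V ⊓ U α)}
    (h : μ.act (V ⊓ U α) k (S.res inf_le_right (s α)) = S.res inf_le_left x) :
    hSec μ U s V x α = k :=
  μ.div_eq h

/-- The transition identity for the comparison elements. -/
lemma hSec_trans {X : Type} [TopologicalSpace X] {G : SheafOfGroups X} {S : SheafOfSets X}
    (μ : TorsorStr G S) {A : Type} (U : A → Opens X) (s : ∀ α, S.obj (U α))
    (g : ∀ α β, G.obj (U α ⊓ U β))
    (hg : ∀ α β, μ.act (U α ⊓ U β) (g α β) (S.res inf_le_right (s β)) =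
      S.res inf_le_left (s α))
    (V : Opens X) (x : S.obj V) (α β : A) :
    G.res (inf_le_left : (V ⊓ U α) ⊓ (V ⊓ U β) ≤ V ⊓ U α) (hSec μ U s V x α) *
      G.res (inf_le_inf inf_le_right inf_le_right) (g α β) =
    G.res inf_le_right (hSec μ U s V x β) := by
  have e2 : μ.act ((V ⊓ U α) ⊓ (V ⊓ U β))
      (G.res (inf_le_right : (V ⊓ U α) ⊓ (V ⊓ U β) ≤ V ⊓ U β) (hSec μ U s V x β))
      (S.res (le_trans (inf_le_inf inf_le_right inf_le_right) inf_le_right) (s β))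
      = S.res (le_trans inf_le_left inf_le_left) x := by
    have i : S.res (le_trans (inf_le_inf inf_le_right inf_le_right) inf_le_right
          : (V ⊓ U α) ⊓ (V ⊓ U β) ≤ U β) (s β)
        = S.res (inf_le_right : (V ⊓ U α) ⊓ (V ⊓ U β) ≤ V ⊓ U β)
            (S.res inf_le_right (s β)) := (S.res_comp _ _ _).symm
    rw [i, ← μ.res_act, hSec_spec, S.res_comp]
  have e1 : μ.act ((V ⊓ U α) ⊓ (V ⊓ U β))
      (G.res (inf_le_left : (V ⊓ U α) ⊓ (V ⊓ U β) ≤ V ⊓ U α) (hSec μ U s V x α) *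
        G.res (inf_le_inf inf_le_right inf_le_right) (g α β))
      (S.res (le_trans (inf_le_inf inf_le_right inf_le_right) inf_le_right) (s β))
      = S.res (le_trans inf_le_left inf_le_left) x := by
    rw [μ.mul_act]
    have i1 : S.res (le_trans (inf_le_inf inf_le_right inf_le_right) inf_le_right
          : (V ⊓ U α) ⊓ (V ⊓ U β) ≤ U β) (s β)
        = S.res (inf_le_inf inf_le_right inf_le_right)
            (S.res inf_le_right (s β)) := (S.res_comp _ _ _).symm
    rw [i1, ← μ.res_act, hg, S.res_comp]
    have i2 : S.res (le_trans (inf_le_inf inf_le_right inf_le_right) inf_le_left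
          : (V ⊓ U α) ⊓ (V ⊓ U β) ≤ U α) (s α)
        = S.res (inf_le_left : (V ⊓ U α) ⊓ (V ⊓ U β) ≤ V ⊓ U α)
            (S.res inf_le_right (s α)) := (S.res_comp _ _ _).symm
    rw [i2, ← μ.res_act, hSec_spec, S.res_comp]
  exact μ.act_cancel (e1.trans e2.symm)

/-- Compatibility of locally defined sections obtained by acting on the chosen
local sections, given the transition identity for the acting elements. -/
lemma act_glue_compat {X : Type} [TopologicalSpace X] {G : SheafOfGroups X} {S' : SheafOfSets X}
    (μ' : TorsorStr G S') {A : Type} (U : A → Opens X) (s' : ∀ α, S'.obj (U α))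
    (g' : ∀ α β, G.obj (U α ⊓ U β))
    (hg' : ∀ α β, μ'.act (U α ⊓ U β) (g' α β) (S'.res inf_le_right (s' β)) =
      S'.res inf_le_left (s' α))
    (V : Opens X) (c : ∀ α, G.obj (V ⊓ U α))
    (hc : ∀ α β, G.res (inf_le_left : (V ⊓ U α) ⊓ (V ⊓ U β) ≤ V ⊓ U α) (c α) *
      G.res (inf_le_inf inf_le_right inf_le_right) (g' α β) = G.res inf_le_right (c β))
    (α β : A) :
    S'.res (inf_le_left : (V ⊓ U α) ⊓ (V ⊓ U β) ≤ V ⊓ U α)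
        (μ'.act (V ⊓ U α) (c α) (S'.res inf_le_right (s' α))) =
      S'.res inf_le_right (μ'.act (V ⊓ U β) (c β) (S'.res inf_le_right (s' β))) := by
  rw [μ'.res_act, μ'.res_act, S'.res_comp, S'.res_comp]
  have i1 := congrArg
    (S'.res (inf_le_inf inf_le_right inf_le_right : (V ⊓ U α) ⊓ (V ⊓ U β) ≤ U α ⊓ U β))
    (hg' α β)
  rw [μ'.res_act, S'.res_comp, S'.res_comp] at i1
  rw [← i1, ← μ'.mul_act, hc α β]

theorem torsors_isomorphic_of_equivalent_cocycles {X : Type} [TopologicalSpace X]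
    (G : SheafOfGroups X) (S S' : SheafOfSets X)
    (μ : TorsorStr G S) (μ' : TorsorStr G S')
    {A : Type} (U : A → Opens X) (hcov : ∀ x : X, ∃ α, x ∈ U α)
    (s : ∀ α, S.obj (U α)) (s' : ∀ α, S'.obj (U α))
    (g g' : ∀ α β, G.obj (U α ⊓ U β))
    (hg : ∀ α β, μ.act (U α ⊓ U β) (g α β) (S.res inf_le_right (s β)) =
      S.res inf_le_left (s α))
    (hg' : ∀ α β, μ'.act (U α ⊓ U β) (g' α β) (S'.res inf_le_right (s' β)) =
      S'.res inf_le_left (s' α))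
    (f : ∀ α, G.obj (U α))
    (hf : ∀ α β, G.res (inf_le_left : U α ⊓ U β ≤ U α) (f α) * g α β =
      g' α β * G.res (inf_le_right : U α ⊓ U β ≤ U β) (f β)) :
    ∃ φ : ∀ V : Opens X, S.obj V → S'.obj V,
      (∀ (V W : Opens X) (h : W ≤ V) (x : S.obj V),
        φ W (S.res h x) = S'.res h (φ V x)) ∧
      (∀ (V : Opens X) (k : G.obj V) (x : S.obj V),
        φ V (μ.act V k x) = μ'.act V k (φ V x)) ∧
      (∀ V : Opens X, Function.Bijective (φ V)) := by
  classical
  have hcovV : ∀ (V : Opens X), ∀ y ∈ V, ∃ α, y ∈ V ⊓ U α := by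
    intro V y hy
    obtain ⟨α, hα⟩ := hcov y
    exact ⟨α, hy, hα⟩
  have uniq : ∀ (V : Opens X) (y z : S'.obj V),
      (∀ α, S'.res (inf_le_left : V ⊓ U α ≤ V) y = S'.res inf_le_left z) → y = z :=
    fun V y z h => S'.sep (fun α => V ⊓ U α) (fun _ => inf_le_left) (hcovV V) y z h
  have uniqS : ∀ (V : Opens X) (y z : S.obj V),
      (∀ α, S.res (inf_le_left : V ⊓ U α ≤ V) y = S.res inf_le_left z) → y = z :=
    fun V y z h => S.sep (fun α => V ⊓ U α) (fun _ => inf_le_left) (hcovV V) y z h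
  -- restriction of the cocycle-equivalence identity
  have hfW : ∀ (V : Opens X) (α β : A),
      G.res (le_trans (inf_le_inf inf_le_right inf_le_right) inf_le_left :
          (V ⊓ U α) ⊓ (V ⊓ U β) ≤ U α) (f α) *
        G.res (inf_le_inf inf_le_right inf_le_right) (g α β)
      = G.res (inf_le_inf inf_le_right inf_le_right) (g' α β) *
        G.res (le_trans (inf_le_inf inf_le_right inf_le_right) inf_le_right) (f β) := by
    intro V α β
    have h1 := congrArg
      (G.res (inf_le_inf inf_le_right inf_le_right :
        (V ⊓ U α) ⊓ (V ⊓ U β) ≤ U α ⊓ U β)) (hf α β)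
    rw [map_mul, map_mul, G.res_comp, G.res_comp] at h1
    exact h1
  -- transition identity for the elements defining φ
  have hc : ∀ (V : Opens X) (x : S.obj V) (α β : A),
      G.res (inf_le_left : (V ⊓ U α) ⊓ (V ⊓ U β) ≤ V ⊓ U α)
          (hSec μ U s V x α * (G.res inf_le_right (f α))⁻¹) *
        G.res (inf_le_inf inf_le_right inf_le_right) (g' α β)
      = G.res inf_le_right (hSec μ U s V x β * (G.res inf_le_right (f β))⁻¹) := by
    intro V x α β
    rw [map_mul, map_mul, map_inv, map_inv, G.res_comp, G.res_comp]
    have e : (G.res (le_trans (inf_le_inf inf_le_right inf_le_right) inf_le_left :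
          (V ⊓ U α) ⊓ (V ⊓ U β) ≤ U α) (f α))⁻¹ *
        G.res (inf_le_inf inf_le_right inf_le_right) (g' α β)
        = G.res (inf_le_inf inf_le_right inf_le_right) (g α β) *
          (G.res (le_trans (inf_le_inf inf_le_right inf_le_right) inf_le_right) (f β))⁻¹ := by
      rw [inv_mul_eq_iff_eq_mul, ← mul_assoc, hfW V α β, mul_assoc, mul_inv_cancel, mul_one]
    rw [mul_assoc, e, ← mul_assoc, hSec_trans μ U s g hg V x α β]
  -- transition identity for the elements defining the inverse
  have hd : ∀ (V : Opens X) (y : S'.obj V) (α β : A),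
      G.res (inf_le_left : (V ⊓ U α) ⊓ (V ⊓ U β) ≤ V ⊓ U α)
          (hSec μ' U s' V y α * G.res inf_le_right (f α)) *
        G.res (inf_le_inf inf_le_right inf_le_right) (g α β)
      = G.res inf_le_right (hSec μ' U s' V y β * G.res inf_le_right (f β)) := by
    intro V y α β
    rw [map_mul, map_mul, G.res_comp, G.res_comp, mul_assoc, hfW V α β, ← mul_assoc,
      hSec_trans μ' U s' g' hg' V y α β]
  -- construct φ by gluing
  have exφ : ∀ (V : Opens X) (x : S.obj V), ∃ y : S'.obj V,
      ∀ α, S'.res (inf_le_left : V ⊓ U α ≤ V) y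
        = μ'.act (V ⊓ U α) (hSec μ U s V x α * (G.res inf_le_right (f α))⁻¹)
            (S'.res inf_le_right (s' α)) := by
    intro V x
    exact S'.glue (fun α => V ⊓ U α) (fun _ => inf_le_left) (hcovV V) _
      (fun α β => act_glue_compat μ' U s' g' hg' V _ (hc V x) α β)
  choose φ hφ using exφ
  -- behaviour of hSec under restriction and action
  have hres : ∀ (V W : Opens X) (h : W ≤ V) (x : S.obj V) (α : A),
      hSec μ U s W (S.res h x) α
        = G.res (inf_le_inf h le_rfl : W ⊓ U α ≤ V ⊓ U α) (hSec μ U s V x α) := by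
    intro V W h x α
    apply hSec_eq
    have i : S.res (inf_le_right : W ⊓ U α ≤ U α) (s α)
        = S.res (inf_le_inf h le_rfl) (S.res inf_le_right (s α)) := (S.res_comp _ _ _).symm
    rw [i, ← μ.res_act, hSec_spec, S.res_comp, S.res_comp]
  have hact : ∀ (V : Opens X) (k : G.obj V) (x : S.obj V) (α : A),
      hSec μ U s V (μ.act V k x) α = G.res inf_le_left k * hSec μ U s V x α := by
    intro V k x α
    apply hSec_eq
    rw [μ.mul_act, hSec_spec, ← μ.res_act]
  refine ⟨φ, ?_, ?_, ?_⟩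
  · -- compatibility with restriction
    intro V W h x
    apply uniq W
    intro α
    rw [hφ W (S.res h x) α, hres V W h x α, S'.res_comp]
    have i : S'.res (le_trans (inf_le_left : W ⊓ U α ≤ W) h) (φ V x)
        = S'.res (inf_le_inf h le_rfl) (S'.res inf_le_left (φ V x)) := (S'.res_comp _ _ _).symm
    rw [i, hφ V x α, μ'.res_act, S'.res_comp, map_mul, map_inv, G.res_comp]
  · -- compatibility with the action
    intro V k x
    apply uniq V
    intro α
    rw [hφ V (μ.act V k x) α, hact V k x α, μ'.res_act, hφ V x α, ← μ'.mul_act, mul_assoc]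
  · -- bijectivity
    intro V
    constructor
    · intro x1 x2 hx
      apply uniqS V
      intro α
      have t1 := hφ V x1 α
      have t2 := hφ V x2 α
      rw [hx] at t1
      have h12 : hSec μ U s V x1 α = hSec μ U s V x2 α :=
        mul_right_cancel (μ'.act_cancel (t1.symm.trans t2))
      rw [← hSec_spec μ U s V x1 α, ← hSec_spec μ U s V x2 α, h12]
    · intro y
      have exx : ∃ x : S.obj V, ∀ α, S.res (inf_le_left : V ⊓ U α ≤ V) x
          = μ.act (V ⊓ U α) (hSec μ' U s' V y α * G.res inf_le_right (f α))
              (S.res inf_le_right (s α)) :=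
        S.glue (fun α => V ⊓ U α) (fun _ => inf_le_left) (hcovV V) _
          (fun α β => act_glue_compat μ U s g hg V _ (hd V y) α β)
      obtain ⟨x, hx⟩ := exx
      refine ⟨x, ?_⟩
      apply uniq V
      intro α
      rw [hφ V x α]
      have e1 : hSec μ U s V x α = hSec μ' U s' V y α * G.res inf_le_right (f α) := by
        apply hSec_eq
        rw [← hx α]
      rw [e1, mul_assoc, mul_inv_cancel, mul_one]
      exact hSec_spec μ' U s' V y α
end

section
/- Let A be an index type, K_α a group for each α ∈ A, λ_{αβ} : K_β → K_α a group isomorphism for each α, β ∈ A, and g_{αβγ} ∈ K_α elements for each α, β, γ ∈ A, satisfying: (1) λ_{αβ}(λ_{βγ}(k)) = g_{αβγ} · λ_{αγ}(k) · g_{αβγ}⁻¹ for all k ∈ K_γ, and (2) g_{αβγ} · g_{αγδ} = λ_{αβ}(g_{βγδ}) · g_{αβδ} for all α, β, γ, δ. Then the composition law (k, l) ↦ k · λ_{αβ}(l) · g_{αβγ} (composing an arrow k ∈ K_α, regarded as an arrow β → α, with an arrow l ∈ K_β, regarded as an arrow γ → β) is associative: for all α, β, γ, δ ∈ A and all k ∈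 K_α, l ∈ K_β, m ∈ K_γ, ( k · λ_{αβ}(l) · g_{αβγ} ) · λ_{αγ}(m) · g_{αγδ} = k · λ_{αβ}( l · λ_{βγ}(m) · g_{βγδ} ) · g_{αβδ}. -/
/-!
STATEMENT 18: Given groups K_α, isomorphisms λ_{αβ} : K_β → K_α and elements
g_{αβγ} ∈ K_α satisfying the non-abelian 2-cocycle conditions
(1) λ_{αβ}(λ_{βγ}(k)) = g_{αβγ} · λ_{αγ}(k) · g_{αβγ}⁻¹ and
(2) g_{αβγ} · g_{αγδ} = λ_{αβ}(g_{βγδ}) · g_{αβδ},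
the composition law (k, l) ↦ k · λ_{αβ}(l) · g_{αβγ} (composing arrows β → α and
γ → β in the groupoid built from the cocycle) is associative.
-/

theorem cocycle_composition_assoc {A : Type*} (K : A → Type*) [∀ α, Group (K α)]
    (lam : ∀ α β : A, K β ≃* K α) (g : ∀ α β γ : A, K α)
    (h1 : ∀ (α β γ : A) (k : K γ),
      lam α β (lam β γ k) = g α β γ * lam α γ k * (g α β γ)⁻¹)
    (h2 : ∀ α β γ δ : A, g α β γ * g α γ δ = lam α β (g β γ δ) * g α β δ) :
    ∀ (α β γ δ : A) (k : K α) (l : K β) (m : K γ),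
      (k * lam α β l * g α β γ) * lam α γ m * g α γ δ =
        k * lam α β (l * lam β γ m * g β γ δ) * g α β δ := by
  intro α β γ δ k l m
  simp only [map_mul, h1]
  simp only [mul_assoc]
  rw [← h2]
  simp only [← mul_assoc]
  group
end

section
/- Let A be an index type, K_α a group for each α ∈ A, λ_{αβ} : K_β → K_α a group isomorphism for each α, β ∈ A, and g_{αβγ} ∈ K_α elements such that λ_{αβ}(λ_{βγ}(k)) = g_{αβγ} · λ_{αγ}(k) · g_{αβγ}⁻¹ for all k ∈ K_γ and all α, β, γ. Define ξ_{αβγδ} := g_{αβγ} · g_{αγδ} · g_{αβδ}⁻¹ · λ_{αβ}(g_{βγδ})⁻¹ ∈ K_α. Then: (a) ξ_{αβγδ} lies in the center Z(K_α) for all α, β, γ, δ; and (b) if moreover there are central elements ζ_{αβγ} ∈ Z(K_α) with ξ_{αβγδ} = λ_{αβ}(ζ_{βγδ}) · ζ_{αβδ} · ζ_{αγδ}⁻¹ · ζ_{αβγ}⁻¹ for all α, β, γ, δ, then the elements h_{αβγ} := ζ_{αβγ} · g_{αβγ} satisfy the cocycle identity h_{αβγ} · h_{αγδ} = λ_{αβ}(h_{βγδ})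 · h_{αβδ} for all α, β, γ, δ. -/
/-!
STATEMENT 19: Given groups K_α, isomorphisms λ_{αβ} : K_β → K_α and elements
g_{αβγ} ∈ K_α with λ_{αβ}(λ_{βγ}(k)) = g_{αβγ} · λ_{αγ}(k) · g_{αβγ}⁻¹, the
boundary ξ_{αβγδ} := g_{αβγ} · g_{αγδ} · g_{αβδ}⁻¹ · λ_{αβ}(g_{βγδ})⁻¹ is central;
and if ξ is the coboundary of a central cochain ζ, then h_{αβγ} := ζ_{αβγ} · g_{αβγ}
is an actual cocycle: h_{αβγ} · h_{αγδ} = λ_{αβ}(h_{βγδ}) · h_{αβδ}.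
-/

/-- A central element commutes with everything. -/
lemma central_comm {G : Type*} [Group G] {z : G} (hz : z ∈ Subgroup.center G) (x : G) :
    x * z = z * x := Subgroup.mem_center_iff.mp hz x

/-- Isomorphisms map central elements to central elements. -/
lemma central_map {G H : Type*} [Group G] [Group H] (f : G ≃* H) {z : G}
    (hz : z ∈ Subgroup.center G) : f z ∈ Subgroup.center H := by
  rw [Subgroup.mem_center_iff]
  intro x
  have : x = f (f.symm x) := (f.apply_symm_apply x).symm
  rw [this, ← map_mul, ← map_mul, central_comm hz]

theorem cocycle_obstruction {A : Type*} (K : A → Type*) [∀ α, Group (K α)]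
    (lam : ∀ α β : A, K β ≃* K α) (g : ∀ α β γ : A, K α)
    (h1 : ∀ (α β γ : A) (k : K γ),
      lam α β (lam β γ k) = g α β γ * lam α γ k * (g α β γ)⁻¹) :
    -- (a) the boundary ξ of the non-abelian cochain g is central
    (∀ α β γ δ : A,
      g α β γ * g α γ δ * (g α β δ)⁻¹ * (lam α β (g β γ δ))⁻¹ ∈
        Subgroup.center (K α)) ∧
    -- (b) adjusting g by a central cochain ζ with dζ = ξ yields an actual cocycle
    (∀ ζ : ∀ α β γ : A, K α,
      (∀ α β γ, ζ α β γ ∈ Subgroup.center (K α)) →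
      (∀ α β γ δ : A,
        g α β γ * g α γ δ * (g α β δ)⁻¹ * (lam α β (g β γ δ))⁻¹ =
          lam α β (ζ β γ δ) * ζ α β δ * (ζ α γ δ)⁻¹ * (ζ α β γ)⁻¹) →
      ∀ α β γ δ : A,
        (ζ α β γ * g α β γ) * (ζ α γ δ * g α γ δ) =
          lam α β (ζ β γ δ * g β γ δ) * (ζ α β δ * g α β δ)) := by
  have key : ∀ (α β γ δ : A) (k : K δ),
      (g α β γ * g α γ δ) * lam α δ k * (g α β γ * g α γ δ)⁻¹ =
      (lam α β (g β γ δ) * g α β δ) * lam α δ k *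
        (lam α β (g β γ δ) * g α β δ)⁻¹ := by
    intro α β γ δ k
    have e1 := h1 α γ δ k
    have e2 := h1 α β γ (lam γ δ k)
    have e3 := h1 α β δ k
    have e5 : lam α β (lam β γ (lam γ δ k)) =
        lam α β (g β γ δ) * lam α β (lam β δ k) * (lam α β (g β γ δ))⁻¹ := by
      rw [← map_inv, ← map_mul, ← map_mul, h1 β γ δ k]
    have t1 : (g α β γ * g α γ δ) * lam α δ k * (g α β γ * g α γ δ)⁻¹ =
        g α β γ * (g α γ δ * lam α δ k * (g α γ δ)⁻¹) * (g α β γ)⁻¹ := by group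
    have t2 : (lam α β (g β γ δ) * g α β δ) * lam α δ k *
        (lam α β (g β γ δ) * g α β δ)⁻¹ =
        lam α β (g β γ δ) * (g α β δ * lam α δ k * (g α β δ)⁻¹) *
          (lam α β (g β γ δ))⁻¹ := by group
    rw [t1, ← e1, ← e2, t2, ← e3]
    exact e5
  constructor
  · intro α β γ δ
    rw [Subgroup.mem_center_iff]
    intro x
    have hk := key α β γ δ ((lam α δ).symm
      ((lam α β (g β γ δ) * g α β δ)⁻¹ * x * (lam α β (g β γ δ) * g α β δ)))
    rw [MulEquiv.apply_symm_apply] at hk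
    have h2 : (g α β γ * g α γ δ) *
        ((lam α β (g β γ δ) * g α β δ)⁻¹ * x * (lam α β (g β γ δ) * g α β δ)) *
        (g α β γ * g α γ δ)⁻¹ = x := by
      rw [hk]; group
    conv_lhs => rw [← h2]
    group
  · intro ζ hc hξ α β γ δ
    have hgg : g α β γ * g α γ δ =
        (lam α β (ζ β γ δ) * ζ α β δ * (ζ α γ δ)⁻¹ * (ζ α β γ)⁻¹) *
          (lam α β (g β γ δ) * g α β δ) := by
      rw [← hξ α β γ δ]; group
    -- central computation using commutativity of central elements
    have cancel : ∀ {z x : K α}, z ∈ Subgroup.center (K α) → z * x * z⁻¹ = x := by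
      intro z x hz
      rw [← central_comm hz]; group
    have hcent : ζ α β γ * ζ α γ δ *
        (lam α β (ζ β γ δ) * ζ α β δ * (ζ α γ δ)⁻¹ * (ζ α β γ)⁻¹) =
        lam α β (ζ β γ δ) * ζ α β δ := by
      calc ζ α β γ * ζ α γ δ *
            (lam α β (ζ β γ δ) * ζ α β δ * (ζ α γ δ)⁻¹ * (ζ α β γ)⁻¹)
          = ζ α β γ * (ζ α γ δ * (lam α β (ζ β γ δ) * ζ α β δ) * (ζ α γ δ)⁻¹) *
            (ζ α β γ)⁻¹ := by group
        _ = ζ α β γ * (lam α β (ζ β γ δ) * ζ α β δ) * (ζ α β γ)⁻¹ := by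
            rw [cancel (hc α γ δ)]
        _ = lam α β (ζ β γ δ) * ζ α β δ := cancel (hc α β γ)
    calc ζ α β γ * g α β γ * (ζ α γ δ * g α γ δ)
        = ζ α β γ * (g α β γ * ζ α γ δ) * g α γ δ := by group
      _ = ζ α β γ * (ζ α γ δ * g α β γ) * g α γ δ := by
          rw [central_comm (hc α γ δ)]
      _ = ζ α β γ * ζ α γ δ * (g α β γ * g α γ δ) := by group
      _ = ζ α β γ * ζ α γ δ *
            ((lam α β (ζ β γ δ) * ζ α β δ * (ζ α γ δ)⁻¹ * (ζ α β γ)⁻¹) *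
              (lam α β (g β γ δ) * g α β δ)) := by rw [hgg]
      _ = (ζ α β γ * ζ α γ δ *
            (lam α β (ζ β γ δ) * ζ α β δ * (ζ α γ δ)⁻¹ * (ζ α β γ)⁻¹)) *
              (lam α β (g β γ δ) * g α β δ) := by group
      _ = (lam α β (ζ β γ δ) * ζ α β δ) * (lam α β (g β γ δ) * g α β δ) := by
            rw [hcent]
      _ = lam α β (ζ β γ δ) * (ζ α β δ * lam α β (g β γ δ)) * g α β δ := by group
      _ = lam α β (ζ β γ δ) * (lam α β (g β γ δ) * ζ α β δ) * g α β δ := by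
            rw [central_comm (hc α β δ)]
      _ = lam α β (ζ β γ δ * g β γ δ) * (ζ α β δ * g α β δ) := by
            rw [map_mul]; group
end
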